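/- Fix s ≥ 0 and a : 𝒳 → ℝ with V_{s,a} > 0, define φ_{s,a}(x,y) = ( i_{s,a}(x,y) − Σ_{y'} Ŵ(y'|x) i_{s,a}(x,y') ) / √V_{s,a} and, for r ≥ 0, W̃*_{s,a}(y|x) = Ŵ(y|x) ( 1 − √(2r) · φ_{s,a}(x,y) ). Then: (i) Σ_y W̃*_{s,a}(y|x) = 1 for every x ∈ 𝒳 and every r ≥ 0; (ii) W̃*_{s,a}(y|x) ≥ 0 for all (x,y) if and only if r ≤ 1 / ( 2 · max_{(x,y) : φ_{s,a}(x,y) > 0} φ_{s,a}(x,y)² ), and this threshold is strictly positive; (iii) for every r ≥ 0, (1/2) Σ_{x,y} Q(x) ( W̃*_{s,a}(y|x) − Ŵ(y|x) )² / Ŵ(y|x) = r, i.e., W̃*_{s,a} lies on the boundary of the chi-squared ball of radius r. -/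
import Mathlib


open Real Filter

variable {𝓧 𝓨 : Type*} [Fintype 𝓧] [Fintype 𝓨]

/-- Mismatched information density `i_{s,a}(x,y)`. -/
noncomputable def iDen (Q : 𝓧 → ℝ) (Wh : 𝓧 → 𝓨 → ℝ) (s : ℝ) (a : 𝓧 → ℝ) (x : 𝓧) (y : 𝓨) : ℝ :=
  Real.log ((Wh x y ^ s * Real.exp (a x)) / ∑ x' : 𝓧, Q x' * Wh x' y ^ s * Real.exp (a x'))

/-- `V_{s,a}`. -/
noncomputable def Vsa (Q : 𝓧 → ℝ) (Wh : 𝓧 → 𝓨 → ℝ) (s : ℝ) (a : 𝓧 → ℝ) : ℝ :=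
  ∑ x : 𝓧, Q x * ((∑ y : 𝓨, Wh x y * (iDen Q Wh s a x y) ^ 2)
    - (∑ y : 𝓨, Wh x y * iDen Q Wh s a x y) ^ 2)

/-- `φ_{s,a}(x,y)`. -/
noncomputable def phiSA (Q : 𝓧 → ℝ) (Wh : 𝓧 → 𝓨 → ℝ) (s : ℝ) (a : 𝓧 → ℝ) (x : 𝓧) (y : 𝓨) : ℝ :=
  (iDen Q Wh s a x y - ∑ y' : 𝓨, Wh x y' * iDen Q Wh s a x y') / Real.sqrt (Vsa Q Wh s a)

/-- Worst-case channel `W̃*_{s,a}` at radius `r`. -/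
noncomputable def Wstar (Q : 𝓧 → ℝ) (Wh : 𝓧 → 𝓨 → ℝ) (s : ℝ) (a : 𝓧 → ℝ) (r : ℝ) :
    𝓧 → 𝓨 → ℝ :=
  fun x y => Wh x y * (1 - Real.sqrt (2 * r) * phiSA Q Wh s a x y)

/-- Each row of `φ` has `Wh`-weighted mean zero. -/
lemma phi_row_sum (Q : 𝓧 → ℝ) (Wh : 𝓧 → 𝓨 → ℝ) (hWsum : ∀ x, ∑ y : 𝓨, Wh x y = 1)
    (s : ℝ) (a : 𝓧 → ℝ) (x : 𝓧) :
    ∑ y : 𝓨, Wh x y * phiSA Q Wh s a x y = 0 := by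
  have hnum : ∑ y : 𝓨, Wh x y * (iDen Q Wh s a x y
      - ∑ y' : 𝓨, Wh x y' * iDen Q Wh s a x y') = 0 := by
    simp only [mul_sub, Finset.sum_sub_distrib, ← Finset.sum_mul, hWsum x, one_mul, sub_self]
  simp only [phiSA, ← mul_div_assoc, ← Finset.sum_div, hnum, zero_div]

/-- The `Q ⊗ Wh`-weighted second moment of `φ` is one. -/
lemma phi_sq_sum (Q : 𝓧 → ℝ) (Wh : 𝓧 → 𝓨 → ℝ) (hWsum : ∀ x, ∑ y : 𝓨, Wh x y = 1)
    (s : ℝ) (a : 𝓧 → ℝ) (hV : 0 < Vsa Q Wh s a) :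
    ∑ x : 𝓧, Q x * ∑ y : 𝓨, Wh x y * (phiSA Q Wh s a x y) ^ 2 = 1 := by
  have hVne : Vsa Q Wh s a ≠ 0 := hV.ne'
  have hsq : (Real.sqrt (Vsa Q Wh s a)) ^ 2 = Vsa Q Wh s a := Real.sq_sqrt hV.le
  have hphi : ∀ x y, (phiSA Q Wh s a x y) ^ 2
      = (iDen Q Wh s a x y - ∑ y' : 𝓨, Wh x y' * iDen Q Wh s a x y') ^ 2 / Vsa Q Wh s a := by
    intro x y; rw [phiSA, div_pow, hsq]
  have hvar : ∀ x, ∑ y : 𝓨, Wh x y * (iDen Q Wh s a x y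
        - ∑ y' : 𝓨, Wh x y' * iDen Q Wh s a x y') ^ 2
      = (∑ y : 𝓨, Wh x y * (iDen Q Wh s a x y) ^ 2)
        - (∑ y : 𝓨, Wh x y * iDen Q Wh s a x y) ^ 2 := by
    intro x
    set m := ∑ y' : 𝓨, Wh x y' * iDen Q Wh s a x y' with hm
    have hexp : ∀ y ∈ Finset.univ, Wh x y * (iDen Q Wh s a x y - m) ^ 2
        = Wh x y * (iDen Q Wh s a x y) ^ 2 - (2 * m) * (Wh x y * iDen Q Wh s a x y)
          + m ^ 2 * Wh x y := by
      intro y _; ring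
    rw [Finset.sum_congr rfl hexp, Finset.sum_add_distrib, Finset.sum_sub_distrib,
      ← Finset.mul_sum, ← Finset.mul_sum, ← hm, hWsum x]
    ring
  calc ∑ x : 𝓧, Q x * ∑ y : 𝓨, Wh x y * (phiSA Q Wh s a x y) ^ 2
      = ∑ x : 𝓧, Q x * (((∑ y : 𝓨, Wh x y * (iDen Q Wh s a x y) ^ 2)
          - (∑ y : 𝓨, Wh x y * iDen Q Wh s a x y) ^ 2) / Vsa Q Wh s a) := by
        refine Finset.sum_congr rfl fun x _ => ?_
        rw [← hvar x, Finset.sum_div]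
        congr 1
        refine Finset.sum_congr rfl fun y _ => ?_
        rw [hphi x y, mul_div_assoc]
    _ = (∑ x : 𝓧, Q x * ((∑ y : 𝓨, Wh x y * (iDen Q Wh s a x y) ^ 2)
          - (∑ y : 𝓨, Wh x y * iDen Q Wh s a x y) ^ 2)) / Vsa Q Wh s a := by
        rw [Finset.sum_div]
        exact Finset.sum_congr rfl fun x _ => (mul_div_assoc _ _ _).symm
    _ = 1 := div_self hVne

/-- `φ` is strictly positive somewhere. -/
lemma phi_pos_exists (Q : 𝓧 → ℝ) (Wh : 𝓧 → 𝓨 → ℝ) (hWpos : ∀ x y, 0 < Wh x y)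
    (hWsum : ∀ x, ∑ y : 𝓨, Wh x y = 1)
    (s : ℝ) (a : 𝓧 → ℝ) (hV : 0 < Vsa Q Wh s a) :
    ∃ x y, 0 < phiSA Q Wh s a x y := by
  by_contra h
  push_neg at h
  have hzero : ∀ x y, phiSA Q Wh s a x y = 0 := by
    intro x y
    have hsum := phi_row_sum Q Wh hWsum s a x
    have hneg : ∑ y : 𝓨, Wh x y * (-(phiSA Q Wh s a x y)) = 0 := by
      simp only [mul_neg, Finset.sum_neg_distrib, hsum, neg_zero]
    have hnonneg : ∀ y ∈ Finset.univ, 0 ≤ Wh x y * (-(phiSA Q Wh s a x y)) :=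
      fun y _ => mul_nonneg (hWpos x y).le (neg_nonneg.2 (h x y))
    have := (Finset.sum_eq_zero_iff_of_nonneg hnonneg).1 hneg y (Finset.mem_univ y)
    rcases mul_eq_zero.1 this with h1 | h1
    · exact absurd h1 (hWpos x y).ne'
    · linarith [neg_eq_zero.1 h1]
  have h1 := phi_sq_sum Q Wh hWsum s a hV
  simp [hzero] at h1

/-- Properties of `W̃*_{s,a}`: rows sum to one; nonnegativity holds iff the radius is
below the (positive) feasibility threshold; and `W̃*_{s,a}` lies exactly on the boundary
of the chi-squared ball of radius `r`. -/
theorem stmt3 [Nonempty 𝓧] [Nonempty 𝓨]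
    (Q : 𝓧 → ℝ) (hQpos : ∀ x, 0 < Q x) (hQle : ∀ x, Q x ≤ 1) (hQsum : ∑ x : 𝓧, Q x = 1)
    (Wh : 𝓧 → 𝓨 → ℝ) (hWpos : ∀ x y, 0 < Wh x y) (hWsum : ∀ x, ∑ y : 𝓨, Wh x y = 1)
    (s : ℝ) (hs : 0 ≤ s) (a : 𝓧 → ℝ) (hV : 0 < Vsa Q Wh s a) :
    (∀ r : ℝ, 0 ≤ r → ∀ x : 𝓧, ∑ y : 𝓨, Wstar Q Wh s a r x y = 1) ∧
    (∀ r : ℝ, 0 ≤ r →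
      ((∀ x y, 0 ≤ Wstar Q Wh s a r x y) ↔
        r ≤ 1 / (2 * sSup {v | ∃ x y, 0 < phiSA Q Wh s a x y ∧ v = (phiSA Q Wh s a x y) ^ 2}))) ∧
    (0 < 1 / (2 * sSup {v | ∃ x y, 0 < phiSA Q Wh s a x y ∧ v = (phiSA Q Wh s a x y) ^ 2})) ∧
    (∀ r : ℝ, 0 ≤ r →
      (1 / 2) * ∑ x : 𝓧, ∑ y : 𝓨, Q x * (Wstar Q Wh s a r x y - Wh x y) ^ 2 / Wh x y = r) := by
  set S : Set ℝ := {v | ∃ x y, 0 < phiSA Q Wh s a x y ∧ v = (phiSA Q Wh s a x y) ^ 2} with hS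
  have hSfin : S.Finite :=
    (Set.finite_range (fun p : 𝓧 × 𝓨 => (phiSA Q Wh s a p.1 p.2) ^ 2)).subset
      (by rintro v ⟨x, y, -, rfl⟩; exact ⟨(x, y), rfl⟩)
  have hSne : S.Nonempty := by
    obtain ⟨x, y, hxy⟩ := phi_pos_exists Q Wh hWpos hWsum s a hV
    exact ⟨_, x, y, hxy, rfl⟩
  set M := sSup S with hM
  have hMmem : M ∈ S := hSne.csSup_mem hSfin
  have hMub : ∀ v ∈ S, v ≤ M := fun v hv => le_csSup hSfin.bddAbove hv
  obtain ⟨x₀, y₀, hφ₀, hM0⟩ := hMmem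
  have hMpos : 0 < M := by rw [hM0]; positivity
  refine ⟨?_, ?_, ?_, ?_⟩
  · -- rows sum to one
    intro r hr x
    have hc : ∑ y : 𝓨, Wh x y * (Real.sqrt (2 * r) * phiSA Q Wh s a x y)
        = Real.sqrt (2 * r) * ∑ y : 𝓨, Wh x y * phiSA Q Wh s a x y := by
      rw [Finset.mul_sum]
      exact Finset.sum_congr rfl fun y _ => by ring
    simp only [Wstar, mul_sub, mul_one, Finset.sum_sub_distrib, hWsum x, hc,
      phi_row_sum Q Wh hWsum s a x, mul_zero, sub_zero]
  · -- nonnegativity iff threshold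
    intro r hr
    have h2r : (0:ℝ) ≤ 2 * r := by linarith
    have hc2 : Real.sqrt (2 * r) ^ 2 = 2 * r := Real.sq_sqrt h2r
    constructor
    · intro h
      have h0 := h x₀ y₀
      have hW := hWpos x₀ y₀
      have hle : Real.sqrt (2 * r) * phiSA Q Wh s a x₀ y₀ ≤ 1 := by
        by_contra hcon
        push_neg at hcon
        have : Wstar Q Wh s a r x₀ y₀ < 0 := by
          simp only [Wstar]
          apply mul_neg_of_pos_of_neg hW
          linarith
        linarith
      have hnn : 0 ≤ Real.sqrt (2 * r) * phiSA Q Wh s a x₀ y₀ :=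
        mul_nonneg (Real.sqrt_nonneg _) hφ₀.le
      have hsq : (Real.sqrt (2 * r) * phiSA Q Wh s a x₀ y₀) ^ 2 ≤ 1 := by
        nlinarith
      have h2rM : 2 * r * M ≤ 1 := by
        rw [hM0]
        nlinarith [hc2]
      rw [le_div_iff₀ (by positivity : (0:ℝ) < 2 * M)]
      nlinarith
    · intro hr' x y
      have h2rM : 2 * r * M ≤ 1 := by
        have := (le_div_iff₀ (by positivity : (0:ℝ) < 2 * M)).1 hr'
        nlinarith
      rcases le_or_gt (phiSA Q Wh s a x y) 0 with hφ | hφ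
      · have : Real.sqrt (2 * r) * phiSA Q Wh s a x y ≤ 0 :=
          mul_nonpos_of_nonneg_of_nonpos (Real.sqrt_nonneg _) hφ
        exact mul_nonneg (hWpos x y).le (by linarith)
      · have hmem : (phiSA Q Wh s a x y) ^ 2 ∈ S := ⟨x, y, hφ, rfl⟩
        have hub := hMub _ hmem
        have key : Real.sqrt (2 * r) * phiSA Q Wh s a x y ≤ 1 := by
          have h1 : Real.sqrt (2 * r) * phiSA Q Wh s a x y
              = Real.sqrt (2 * r * (phiSA Q Wh s a x y) ^ 2) := by
            rw [Real.sqrt_mul h2r, Real.sqrt_sq hφ.le]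
          rw [h1]
          calc Real.sqrt (2 * r * (phiSA Q Wh s a x y) ^ 2)
              ≤ Real.sqrt 1 := Real.sqrt_le_sqrt (by nlinarith)
            _ = 1 := Real.sqrt_one
        exact mul_nonneg (hWpos x y).le (by linarith)
  · -- threshold positive
    positivity
  · -- chi-squared boundary
    intro r hr
    have h2r : (0:ℝ) ≤ 2 * r := by linarith
    have hc2 : Real.sqrt (2 * r) ^ 2 = 2 * r := Real.sq_sqrt h2r
    have hterm : ∀ x y, Q x * (Wstar Q Wh s a r x y - Wh x y) ^ 2 / Wh x y
        = (2 * r) * (Q x * (Wh x y * (phiSA Q Wh s a x y) ^ 2)) := by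
      intro x y
      have hW : Wh x y ≠ 0 := (hWpos x y).ne'
      have h1 : (Wstar Q Wh s a r x y - Wh x y) ^ 2
          = Wh x y ^ 2 * (Real.sqrt (2 * r) ^ 2) * (phiSA Q Wh s a x y) ^ 2 := by
        simp only [Wstar]; ring
      rw [h1, hc2]
      field_simp
    calc (1 / 2) * ∑ x : 𝓧, ∑ y : 𝓨, Q x * (Wstar Q Wh s a r x y - Wh x y) ^ 2 / Wh x y
        = (1 / 2) * ∑ x : 𝓧, ∑ y : 𝓨,
            (2 * r) * (Q x * (Wh x y * (phiSA Q Wh s a x y) ^ 2)) := by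
          congr 1
          exact Finset.sum_congr rfl fun x _ => Finset.sum_congr rfl fun y _ => hterm x y
      _ = (1 / 2) * ((2 * r) * ∑ x : 𝓧, Q x * ∑ y : 𝓨, Wh x y * (phiSA Q Wh s a x y) ^ 2) := by
          simp only [← Finset.mul_sum]
      _ = r := by rw [phi_sq_sum Q Wh hWsum s a hV]; ring
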